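/- arXiv:math-ph/0703033 — 2 statements merged into one kernel-verified Lean document; each statement's English description precedes it below -/
import Mathlib

section
/- For fixed x ∈ R and c > 0, the sequence of functions f_n(x) = C_n (c^2 n - x^2)^{(n-2)/2} 1_{|x| ≤ c√n}, where C_n is chosen so that f_n is a probability density, converges pointwise as n → ∞ to the Gaussian density (1/(c√(2π))) exp(-x^2/(2c^2)). -/
/-!
Factor `f n x = A n * g n x` with `A n = C n (c² n)^((n-2)/2)` and the profile
`g n x = (1 - x² / (c² n))^((n-2)/2)` on `x² ≤ c² n`, which is free of the unknown constant.
Pointwise `g n x → exp (-x² / (2c²))`, since `(1 + s/m)^(m-1) → exp s` with `m = n/2`; and from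
`1 - t ≤ exp (-t)` the profiles are dominated by `exp (-x² / (4c²))` once `n ≥ 4`. Dominated
convergence gives `∫ g n → c √(2π)`, so the normalisation `A n ∫ g n = 1` forces
`A n → 1 / (c √(2π))`.
-/

open Real Filter MeasureTheory Topology

theorem tendsto_one_add_div_rpow_sub_exp (s a : ℝ) :
    Tendsto (fun m : ℝ => (1 + s / m) ^ (m - a)) atTop (𝓝 (exp s)) := by
  have hbase : Tendsto (fun m : ℝ => 1 + s / m) atTop (𝓝 1) := by
    simpa using ((tendsto_const_nhds (x := s)).div_atTop tendsto_id).const_add 1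
  have hcorr : Tendsto (fun m : ℝ => (1 + s / m) ^ a) atTop (𝓝 1) := by
    simpa using hbase.rpow_const (Or.inl one_ne_zero)
  have hlim := (tendsto_one_add_div_rpow_exp s).div hcorr one_ne_zero
  rw [div_one] at hlim
  refine hlim.congr' ?_
  filter_upwards [hbase.eventually (lt_mem_nhds one_pos)] with m hm
  rw [rpow_sub hm, Pi.div_apply]

theorem integral_exp_neg_sq_div_two_mul_sq (c : ℝ) :
    ∫ x, exp (-x ^ 2 / (2 * c ^ 2)) = |c| * √(2 * π) := by
  simp_rw [neg_div, div_eq_inv_mul, ← neg_mul, integral_gaussian, div_inv_eq_mul]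
  rw [show π * (2 * c ^ 2) = 2 * π * c ^ 2 by ring, sqrt_mul (by positivity), sqrt_sq_eq_abs,
    mul_comm]

noncomputable def sphereProfile (c : ℝ) (n : ℕ) (x : ℝ) : ℝ :=
  if x ^ 2 ≤ c ^ 2 * n then (1 - x ^ 2 / (c ^ 2 * n)) ^ (((n : ℝ) - 2) / 2) else 0

section sphereProfile

variable {c : ℝ}

theorem measurable_sphereProfile (n : ℕ) : Measurable (sphereProfile c n) :=
  Measurable.ite (measurableSet_le (by fun_prop) measurable_const) (by fun_prop) measurable_const

theorem sphereProfile_nonneg (n : ℕ) (x : ℝ) : 0 ≤ sphereProfile c n x := by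
  unfold sphereProfile
  split_ifs with hx
  · exact rpow_nonneg (sub_nonneg.2 (div_le_one_of_le₀ hx (by positivity))) _
  · exact le_rfl

theorem sphereProfile_le_exp {n : ℕ} (hn : 4 ≤ n) (x : ℝ) :
    sphereProfile c n x ≤ exp (-(4 * c ^ 2)⁻¹ * x ^ 2) := by
  unfold sphereProfile
  split_ifs with hx
  · set t := x ^ 2 / (c ^ 2 * n)
    have hn' : (4 : ℝ) ≤ n := by exact_mod_cast hn
    have hbase : 0 ≤ 1 - t := sub_nonneg.2 (div_le_one_of_le₀ hx (by positivity))
    have hexp : 0 ≤ ((n : ℝ) - 2) / 2 := by linarith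
    have hrate : (4 : ℝ)⁻¹ ≤ ((n : ℝ) - 2) / (2 * n) := by
      rw [le_div_iff₀ (by positivity)]
      linarith
    calc (1 - t) ^ (((n : ℝ) - 2) / 2)
        ≤ exp (-t) ^ (((n : ℝ) - 2) / 2) :=
          rpow_le_rpow hbase (by linarith [add_one_le_exp (-t)]) hexp
      _ = exp (-(x ^ 2 / c ^ 2 * (((n : ℝ) - 2) / (2 * n)))) := by
          rw [← exp_mul]
          congr 1
          simp only [t]
          field_simp
      _ ≤ exp (-(4 * c ^ 2)⁻¹ * x ^ 2) := by
          refine exp_le_exp.2 ?_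
          rw [show -(4 * c ^ 2)⁻¹ * x ^ 2 = -(x ^ 2 / c ^ 2 * 4⁻¹) by ring, neg_le_neg_iff]
          exact mul_le_mul_of_nonneg_left hrate (by positivity)
  · positivity

theorem tendsto_sphereProfile (hc : c ≠ 0) (x : ℝ) :
    Tendsto (fun n => sphereProfile c n x) atTop (𝓝 (exp (-x ^ 2 / (2 * c ^ 2)))) := by
  have hlim := (tendsto_one_add_div_rpow_sub_exp (-x ^ 2 / (2 * c ^ 2)) 1).comp
    (tendsto_natCast_atTop_atTop.atTop_div_const two_pos)
  refine hlim.congr' ?_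
  have hc2 : 0 < c ^ 2 := by positivity
  filter_upwards [(tendsto_natCast_atTop_atTop.const_mul_atTop hc2).eventually_ge_atTop (x ^ 2),
    eventually_gt_atTop 0] with n hxn hn
  have hn' : (0 : ℝ) < n := by exact_mod_cast hn
  rw [Function.comp_apply, sphereProfile, if_pos hxn]
  congr 1
  · field_simp
    ring
  · ring

theorem tendsto_integral_sphereProfile (hc : c ≠ 0) :
    Tendsto (fun n => ∫ x, sphereProfile c n x) atTop (𝓝 (|c| * √(2 * π))) := by
  rw [← integral_exp_neg_sq_div_two_mul_sq, ← tendsto_add_atTop_iff_nat 4]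
  refine tendsto_integral_of_dominated_convergence _
    (fun n => (measurable_sphereProfile _).aestronglyMeasurable)
    (integrable_exp_neg_mul_sq (by positivity : 0 < (4 * c ^ 2)⁻¹))
    (fun n => ae_of_all _ fun x => ?_)
    (ae_of_all _ fun x => (tendsto_sphereProfile hc x).comp (tendsto_add_atTop_nat 4))
  rw [norm_of_nonneg (sphereProfile_nonneg _ x)]
  exact sphereProfile_le_exp (by omega) x

theorem ite_rpow_sub_sq_eq_mul_sphereProfile (hc : 0 < c) {n : ℕ} (hn : n ≠ 0) (x : ℝ) :
    (if |x| ≤ c * √n then (c ^ 2 * n - x ^ 2) ^ (((n : ℝ) - 2) / 2) else 0) =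
      (c ^ 2 * n) ^ (((n : ℝ) - 2) / 2) * sphereProfile c n x := by
  have hr : 0 < c ^ 2 * n := by positivity
  have hiff : |x| ≤ c * √n ↔ x ^ 2 ≤ c ^ 2 * n := by
    rw [← sq_le_sq₀ (abs_nonneg x) (by positivity), sq_abs, mul_pow, sq_sqrt (Nat.cast_nonneg n)]
  simp only [sphereProfile, hiff]
  split_ifs with hx
  · rw [← mul_rpow hr.le (sub_nonneg.2 (div_le_one_of_le₀ hx hr.le)), mul_one_sub,
      mul_div_cancel₀ _ hr.ne']
  · rw [mul_zero]

end sphereProfile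

/-- The normalized densities of the first coordinate of the uniform measure on the
sphere of radius `c√n` converge pointwise to the Gaussian density of variance `c²`. -/
theorem sphere_marginal_density_tendsto_gaussian (c : ℝ) (hc : 0 < c)
    (C : ℕ → ℝ)
    (f : ℕ → ℝ → ℝ)
    (hf : ∀ n x, f n x =
      if |x| ≤ c * Real.sqrt n then C n * (c ^ 2 * n - x ^ 2) ^ (((n : ℝ) - 2) / 2) else 0)
    (hprob : ∀ n, 2 ≤ n → ∫ x, f n x = 1) :
    ∀ x : ℝ, Tendsto (fun n => f n x) atTop
      (nhds ((1 / (c * Real.sqrt (2 * π))) * Real.exp (-x ^ 2 / (2 * c ^ 2)))) := by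
  intro x
  set A : ℕ → ℝ := fun n => C n * (c ^ 2 * n) ^ (((n : ℝ) - 2) / 2)
  have hfac : ∀ n, n ≠ 0 → ∀ x, f n x = A n * sphereProfile c n x := fun n hn x => by
    rw [hf, ← mul_zero (C n), ← mul_ite, ite_rpow_sub_sq_eq_mul_sphereProfile hc hn, mul_assoc]
  have hnorm : ∀ᶠ n in atTop, A n * ∫ x, sphereProfile c n x = 1 := by
    filter_upwards [eventually_ge_atTop 2] with n hn
    rw [← integral_const_mul, ← hprob n hn]
    exact integral_congr_ae (ae_of_all _ fun x => (hfac n (by omega) x).symm)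
  have hI := tendsto_integral_sphereProfile hc.ne'
  rw [abs_of_pos hc] at hI
  have hA : Tendsto A atTop (𝓝 (c * √(2 * π))⁻¹) :=
    (hI.inv₀ (by positivity)).congr' (hnorm.mono fun n hn => (eq_inv_of_mul_eq_one_left hn).symm)
  rw [one_div]
  refine (hA.mul (tendsto_sphereProfile hc.ne' x)).congr' ?_
  filter_upwards [eventually_ne_atTop 0] with n hn
  exact (hfac n hn x).symm
end

section
/- For the finite-dimensional measure L_{1,ξ} on (0,∞)^n with density ∏_k x_k^{m_k - 1}/Γ(m_k) (θ = 1, ∑ m_k = 1), the pushforward under the coordinatewise multiplication map x ↦ (a_1 x_1, ..., a_n x_n) with a_k > 0 and ∑_k m_k log a_k = 0 equals L_{1,ξ} itself. -/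
/-!
The scaling `x ↦ a x` pushes Lebesgue measure forward to `(∏ aₖ)⁻¹ • volume` and transports a
density `f` to `f (a⁻¹ x)`. The density of `L_{1,ξ}` is homogeneous of degree `mₖ - 1` in the
`k`-th coordinate, so the two factors combine to `∏ aₖ ^ (-mₖ) = exp (-∑ mₖ log aₖ) = 1`.
-/

open MeasureTheory Finset
open scoped ENNReal

theorem MeasurableEquiv.map_withDensity {α β : Type*} [MeasurableSpace α] [MeasurableSpace β]
    (e : α ≃ᵐ β) (μ : Measure α) (f : α → ℝ≥0∞) :
    (μ.withDensity f).map e = (μ.map e).withDensity (f ∘ e.symm) := by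
  ext s hs
  rw [e.map_apply, withDensity_apply _ (e.measurable hs), withDensity_apply _ hs, e.restrict_map,
    lintegral_map_equiv]
  simp

theorem MeasureTheory.Measure.map_withDensity_eq_self {α : Type*} [MeasurableSpace α]
    (e : α ≃ᵐ α) {μ : Measure α} {c : ℝ≥0∞} (hμ : μ.map e = c • μ) (hc : c ≠ ∞)
    {f : α → ℝ≥0∞} (hf : ∀ x, f (e x) = c * f x) :
    (μ.withDensity f).map e = μ.withDensity f := by
  rw [e.map_withDensity, hμ, withDensity_smul_measure, ← withDensity_smul' _ _ hc]
  congr 1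
  funext y
  simpa using (hf (e.symm y)).symm

section

variable {ι : Type*} [Fintype ι]

theorem Real.map_volume_pi_mul_left {a : ι → ℝ} (ha : ∀ k, a k ≠ 0) :
    Measure.map (fun x k => a k * x k) (volume : Measure (ι → ℝ)) =
      ENNReal.ofReal |(∏ k, a k)⁻¹| • volume := by
  classical
  have hdet : (Matrix.diagonal a).det ≠ 0 := by
    simpa [Matrix.det_diagonal, prod_ne_zero_iff] using ha
  have hlin : ⇑(Matrix.toLin' (Matrix.diagonal a)) = fun x k => a k * x k := by
    funext x k
    simp [Matrix.mulVec_diagonal]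
  simpa [hlin, Matrix.det_diagonal] using Real.map_matrix_volume_pi_eq_smul_volume_pi hdet

theorem Real.prod_rpow_eq_one_of_sum_mul_log_eq_zero {a m : ι → ℝ} (ha : ∀ k, 0 < a k)
    (h : ∑ k, m k * Real.log (a k) = 0) : ∏ k, a k ^ m k = 1 := by
  simp_rw [Real.rpow_def_of_pos (ha _), ← Real.exp_sum, mul_comm (Real.log _), h, Real.exp_zero]

/-- The density of `L_{1,ξ}` with respect to Lebesgue measure. -/
noncomputable def gammaProductDensity (m : ι → ℝ) : (ι → ℝ) → ℝ≥0∞ :=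
  (Set.univ.pi fun _ => Set.Ioi 0).indicator
    fun x => ENNReal.ofReal (∏ k, x k ^ (m k - 1) / Real.Gamma (m k))

theorem gammaProductDensity_mul_left (m : ι → ℝ) {a : ι → ℝ} (ha : ∀ k, 0 < a k) (x : ι → ℝ) :
    gammaProductDensity m (fun k => a k * x k) =
      ENNReal.ofReal (∏ k, a k ^ (m k - 1)) * gammaProductDensity m x := by
  have hmem : (fun k => a k * x k) ∈ Set.univ.pi (fun _ => Set.Ioi (0 : ℝ)) ↔
      x ∈ Set.univ.pi (fun _ => Set.Ioi (0 : ℝ)) := by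
    simp only [Set.mem_univ_pi, Set.mem_Ioi, mul_pos_iff_of_pos_left (ha _)]
  by_cases hx : x ∈ Set.univ.pi (fun _ => Set.Ioi (0 : ℝ))
  · have hpos : ∀ k, 0 < x k := by simpa using hx
    rw [gammaProductDensity, Set.indicator_of_mem (hmem.2 hx), Set.indicator_of_mem hx,
      ← ENNReal.ofReal_mul (prod_nonneg fun k _ => (Real.rpow_pos_of_pos (ha k) _).le),
      ← prod_mul_distrib]
    congr 1
    refine prod_congr rfl fun k _ => ?_
    rw [Real.mul_rpow (ha k).le (hpos k).le, mul_div_assoc]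
  · rw [gammaProductDensity, Set.indicator_of_notMem (mt hmem.1 hx), Set.indicator_of_notMem hx,
      mul_zero]

end

theorem finite_dim_lebesgue_multiplier_invariance_general (n : ℕ)
    (m : Fin n → ℝ)
    (a : Fin n → ℝ) (ha : ∀ k, 0 < a k) (ha0 : (∑ k, m k * Real.log (a k)) = 0)
    (L : Measure (Fin n → ℝ))
    (hL : L = volume.withDensity (fun x =>
      Set.indicator (Set.univ.pi fun _ : Fin n => Set.Ioi (0:ℝ))
        (fun x => ENNReal.ofReal (∏ k, (x k) ^ (m k - 1) / Real.Gamma (m k))) x)) :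
    Measure.map (fun x k => a k * x k) L = L := by
  have hprod : 0 < ∏ k, a k := prod_pos fun k _ => ha k
  have hvol := Real.map_volume_pi_mul_left fun k => (ha k).ne'
  rw [abs_of_pos (inv_pos.2 hprod)] at hvol
  have hscale : ∏ k, a k ^ (m k - 1) = (∏ k, a k)⁻¹ := by
    simp_rw [Real.rpow_sub (ha _), Real.rpow_one]
    rw [prod_div_distrib, Real.prod_rpow_eq_one_of_sum_mul_log_eq_zero ha ha0, one_div]
  have hdensity (x : Fin n → ℝ) : gammaProductDensity m (fun k => a k * x k) =
      ENNReal.ofReal (∏ k, a k)⁻¹ * gammaProductDensity m x := by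
    rw [gammaProductDensity_mul_left m ha, hscale]
  rw [show L = volume.withDensity (gammaProductDensity m) from hL]
  exact Measure.map_withDensity_eq_self
    (MeasurableEquiv.piCongrRight fun k => MeasurableEquiv.mulLeft₀ (a k) (ha k).ne')
    hvol ENNReal.ofReal_ne_top hdensity

/-- Finite-dimensional invariance of the infinite-dimensional Lebesgue measure under the
multiplier group: the sigma-finite measure `L_{1,ξ}` on `(0,∞)^n` with density
`∏ x_k^{m_k-1}/Γ(m_k)` (`∑ m_k = 1`) is invariant under the coordinatewise
multiplication `x ↦ (a₁x₁,…,aₙxₙ)` whenever `a_k > 0` and `∑ m_k log a_k = 0`. -/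
theorem finite_dim_lebesgue_multiplier_invariance (n : ℕ)
    (m : Fin n → ℝ) (hm : ∀ k, 0 < m k) (hm1 : (∑ k, m k) = 1)
    (a : Fin n → ℝ) (ha : ∀ k, 0 < a k) (ha0 : (∑ k, m k * Real.log (a k)) = 0)
    (L : Measure (Fin n → ℝ))
    (hL : L = volume.withDensity (fun x =>
      Set.indicator (Set.univ.pi fun _ : Fin n => Set.Ioi (0:ℝ))
        (fun x => ENNReal.ofReal (∏ k, (x k) ^ (m k - 1) / Real.Gamma (m k))) x)) :
    Measure.map (fun x k => a k * x k) L = L :=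
  finite_dim_lebesgue_multiplier_invariance_general n m a ha ha0 L hL
end
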